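/- For u, v, w in H²(𝕋) with w ∈ H¹(𝕋), and τ > 0, I(u,v,w) := |⟨u, vw − e^{τ∂ₓ³}[(e^{−τ∂ₓ³}v)(e^{−τ∂ₓ³}w)]⟩| ≤ c·τ·‖∂ₓu‖_{L²}·min(‖∂ₓ²v‖_{L²}‖∂ₓw‖_{L²}, ‖∂ₓ²w‖_{L²}‖∂ₓv‖_{L²}). -/

import Mathlib

/-- The Airy group `e^{t∂ₓ³}` acting on Fourier coefficients by `f̂ₖ ↦ e^{-itk³} f̂ₖ`. -/
noncomputable def airy (t : ℝ) (f : ℤ → ℂ) : ℤ → ℂ :=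
  fun k => Complex.exp (-Complex.I * (t : ℂ) * (k : ℂ) ^ 3) * f k

/-- Fourier coefficients of the pointwise product: convolution of coefficients. -/
noncomputable def fconv (f g : ℤ → ℂ) : ℤ → ℂ := fun k => ∑' j : ℤ, f j * g (k - j)

/-- The derivative `∂ₓ` as the Fourier multiplier `ik`. -/
def dx (f : ℤ → ℂ) : ℤ → ℂ := fun k => Complex.I * (k : ℂ) * f k

/-- The real `L²(𝕋)` pairing `⟨f,g⟩ = ∫ fg`, in terms of Fourier coefficients. -/
noncomputable def pairing (f g : ℤ → ℂ) : ℂ := ∑' k : ℤ, f k * g (-k)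

/-- The `L²(𝕋)` norm in terms of Fourier coefficients. -/
noncomputable def l2norm (f : ℤ → ℂ) : ℝ := Real.sqrt (∑' k : ℤ, ‖f k‖ ^ 2)

/-- Membership in the Sobolev space `Hʳ(𝕋)`, in terms of Fourier coefficients. -/
def memH (r : ℝ) (f : ℤ → ℂ) : Prop :=
  Summable (fun k : ℤ => (1 + (k : ℝ) ^ 2) ^ r * ‖f k‖ ^ 2)

/-! The commutator has Fourier coefficients `∑ⱼ (1 - e^{iφ}) v̂ⱼ ŵₙ₋ⱼ` with the resonance phase
`φ = -3τ n j (n - j)`, since `n³ - j³ - (n - j)³ = 3 n j (n - j)`. The bound `|1 - e^{iφ}| ≤ |φ|`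
puts one derivative on each of `u`, `v`, `w`, and a discrete Young inequality bounds the resulting
trilinear form by `‖∂u‖₂ ‖∂v‖_{ℓ¹} ‖∂w‖₂`; Cauchy–Schwarz against `∑ 1/j²` gives
`‖∂v‖_{ℓ¹} ≤ C ‖∂²v‖₂`. The product being commutative, the same holds with `v` and `w` exchanged. -/

lemma memH.mono {r s : ℝ} {f : ℤ → ℂ} (h : memH r f) (hsr : s ≤ r) : memH s f :=
  h.of_nonneg_of_le (fun k => by positivity) fun k => mul_le_mul_of_nonneg_right
    (Real.rpow_le_rpow_of_exponent_le (by nlinarith [sq_nonneg (k : ℝ)]) hsr) (sq_nonneg _)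

lemma norm_dx (f : ℤ → ℂ) (k : ℤ) : ‖dx f k‖ = |(k : ℝ)| * ‖f k‖ := by
  simp [dx]

lemma memH.dx {r s : ℝ} {f : ℤ → ℂ} (h : memH r f) (hsr : s + 1 ≤ r) : memH s (dx f) := by
  refine (h.mono hsr).of_nonneg_of_le (fun k => by positivity) fun k => ?_
  rw [norm_dx, mul_pow, sq_abs, Real.rpow_add (by positivity), Real.rpow_one, mul_assoc]
  gcongr
  linarith

lemma memH_zero_iff {f : ℤ → ℂ} : memH 0 f ↔ Summable fun k => ‖f k‖ ^ 2 := by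
  simp [memH]

lemma fconv_comm (f g : ℤ → ℂ) : fconv f g = fconv g f := by
  ext k
  rw [fconv, ← (Equiv.subLeft k).tsum_eq]
  simp [fconv, mul_comm]

lemma summable_and_tsum_mul_le_sqrt {ι : Type*} {f g : ι → ℝ} (hf : ∀ i, 0 ≤ f i)
    (hg : ∀ i, 0 ≤ g i) (hf₂ : Summable fun i => f i ^ 2) (hg₂ : Summable fun i => g i ^ 2) :
    (Summable fun i => f i * g i) ∧
      ∑' i, f i * g i ≤ √(∑' i, f i ^ 2) * √(∑' i, g i ^ 2) := by
  simpa [Real.sqrt_eq_rpow] using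
    Real.summable_and_inner_le_Lp_mul_Lq_tsum_of_nonneg .two_two hf hg
      (by simpa using hf₂) (by simpa using hg₂)

lemma le_sqrt_tsum_sq {ι : Type*} {c : ι → ℝ} (hc₂ : Summable fun k => c k ^ 2) (m : ι) :
    c m ≤ √(∑' k, c k ^ 2) :=
  Real.le_sqrt_of_sq_le (hc₂.le_tsum m fun k _ => sq_nonneg (c k))

section Convolution

variable {G : Type*} [AddCommGroup G] {a b c : G → ℝ}

lemma summable_and_tsum_mul_comp_sub_le (ha : ∀ k, 0 ≤ a k) (hc : ∀ k, 0 ≤ c k)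
    (ha₂ : Summable fun k => a k ^ 2) (hc₂ : Summable fun k => c k ^ 2) (m : G) :
    (Summable fun k => a k * c (m - k)) ∧
      ∑' k, a k * c (m - k) ≤ √(∑' k, a k ^ 2) * √(∑' k, c k ^ 2) := by
  obtain ⟨hsum, hle⟩ := summable_and_tsum_mul_le_sqrt ha (fun k => hc (m - k)) ha₂
    ((Equiv.subLeft m).summable_iff.mpr hc₂)
  exact ⟨hsum, hle.trans_eq <| by rw [← (Equiv.subLeft m).tsum_eq fun k => c k ^ 2]; rfl⟩

-- Young's inequality `ℓ² × ℓ¹ × ℓ² → ℝ` for the trilinear form `∑_{k+j+m=0} aₖ bⱼ cₘ`.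
lemma summable_and_tsum_mul_tsum_mul_le (ha : ∀ k, 0 ≤ a k) (hb : ∀ j, 0 ≤ b j)
    (hc : ∀ k, 0 ≤ c k) (ha₂ : Summable fun k => a k ^ 2) (hb₁ : Summable b)
    (hc₂ : Summable fun k => c k ^ 2) :
    (Summable fun k => a k * ∑' j, b j * c (-k - j)) ∧
      ∑' k, a k * ∑' j, b j * c (-k - j) ≤
        (∑' j, b j) * (√(∑' k, a k ^ 2) * √(∑' k, c k ^ 2)) := by
  set A := √(∑' k, a k ^ 2)
  set C := √(∑' k, c k ^ 2)
  have hinner (k : G) : Summable fun j => b j * c (-k - j) :=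
    hb₁.mul_right C |>.of_nonneg_of_le (fun j => mul_nonneg (hb j) (hc _))
      fun j => mul_le_mul_of_nonneg_left (le_sqrt_tsum_sq hc₂ _) (hb j)
  have hrow (j : G) := summable_and_tsum_mul_comp_sub_le ha hc ha₂ hc₂ (-j)
  have hpartial (s : Finset G) :
      ∑ k ∈ s, a k * ∑' j, b j * c (-k - j) ≤ (∑' j, b j) * (A * C) := by
    calc ∑ k ∈ s, a k * ∑' j, b j * c (-k - j)
        = ∑' j, b j * ∑ k ∈ s, a k * c (-j - k) := by
          simp_rw [← tsum_mul_left, Finset.mul_sum]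
          rw [← Summable.tsum_finsetSum fun k _ => (hinner k).mul_left (a k)]
          refine tsum_congr fun j => Finset.sum_congr rfl fun k _ => ?_
          rw [show -j - k = -k - j by abel]
          ring
      _ ≤ ∑' j, b j * (A * C) := by
          have hbound (j : G) : b j * ∑ k ∈ s, a k * c (-j - k) ≤ b j * (A * C) :=
            mul_le_mul_of_nonneg_left (((hrow j).1.sum_le_tsum s
              fun k _ => mul_nonneg (ha k) (hc _)).trans (hrow j).2) (hb j)
          refine Summable.tsum_le_tsum hbound ?_ (hb₁.mul_right _)
          exact (hb₁.mul_right _).of_nonneg_of_le (fun j => mul_nonneg (hb j)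
            (Finset.sum_nonneg fun k _ => mul_nonneg (ha k) (hc _))) hbound
      _ = (∑' j, b j) * (A * C) := tsum_mul_right
  have hnonneg : 0 ≤ fun k => a k * ∑' j, b j * c (-k - j) :=
    fun k => mul_nonneg (ha k) (tsum_nonneg fun j => mul_nonneg (hb j) (hc _))
  exact ⟨summable_of_sum_le hnonneg hpartial, Real.tsum_le_of_sum_le hnonneg hpartial⟩

end Convolution

lemma airy_fconv_airy_neg (τ : ℝ) (f g : ℤ → ℂ) (n : ℤ) :
    airy τ (fconv (airy (-τ) f) (airy (-τ) g)) n =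
      ∑' j : ℤ, Complex.exp (Complex.I * ↑(-(3 * τ * n * j * (n - j)))) * (f j * g (n - j)) := by
  simp only [airy, fconv, ← tsum_mul_left]
  refine tsum_congr fun j => ?_
  have hphase : Complex.I * ↑(-(3 * τ * n * j * (n - j))) =
      -Complex.I * τ * (n : ℂ) ^ 3 + (-Complex.I * ↑(-τ) * (j : ℂ) ^ 3 +
        -Complex.I * ↑(-τ) * ((n - j : ℤ) : ℂ) ^ 3) := by
    push_cast; ring
  rw [hphase, Complex.exp_add, Complex.exp_add]
  ring

lemma norm_fconv_sub_airy_le {τ : ℝ} (hτ : 0 ≤ τ) {f g : ℤ → ℂ} (hf : memH 1 f) (hg : memH 1 g)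
    (n : ℤ) :
    ‖fconv f g n - airy τ (fconv (airy (-τ) f) (airy (-τ) g)) n‖ ≤
      3 * τ * |(n : ℝ)| * ∑' j, ‖dx f j‖ * ‖dx g (n - j)‖ := by
  have hprod : Summable fun j => f j * g (n - j) := by
    refine Summable.of_norm ?_
    simpa only [norm_mul] using (summable_and_tsum_mul_comp_sub_le (fun _ => norm_nonneg _)
      (fun _ => norm_nonneg _) (memH_zero_iff.mp (hf.mono zero_le_one))
      (memH_zero_iff.mp (hg.mono zero_le_one)) n).1
  have hdprod := (summable_and_tsum_mul_comp_sub_le (fun _ => norm_nonneg _)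
      (fun _ => norm_nonneg _) (memH_zero_iff.mp (hf.dx (by norm_num)))
      (memH_zero_iff.mp (hg.dx (by norm_num))) n).1
  set e : ℤ → ℂ := fun j => Complex.exp (Complex.I * ↑(-(3 * τ * n * j * (n - j))))
  have hphased : Summable fun j => e j * (f j * g (n - j)) :=
    hprod.norm.of_norm_bounded fun j => by
      rw [norm_mul, Complex.norm_exp_I_mul_ofReal, one_mul]
  rw [airy_fconv_airy_neg, fconv, ← hprod.tsum_sub hphased]
  refine tsum_of_norm_bounded (hdprod.hasSum.mul_left (3 * τ * |(n : ℝ)|)) fun j => ?_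
  calc ‖f j * g (n - j) - e j * (f j * g (n - j))‖
      = ‖e j - 1‖ * (‖f j‖ * ‖g (n - j)‖) := by
        rw [norm_sub_rev, ← sub_one_mul, norm_mul, norm_mul]
    _ ≤ ‖-(3 * τ * n * j * (n - j))‖ * (‖f j‖ * ‖g (n - j)‖) := by
        gcongr
        exact Real.norm_exp_I_mul_ofReal_sub_one_le
    _ = 3 * τ * |(n : ℝ)| * (‖dx f j‖ * ‖dx g (n - j)‖) := by
        simp only [norm_dx, norm_neg, Real.norm_eq_abs, abs_mul, abs_of_nonneg hτ, Int.cast_sub]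
        norm_num
        ring

lemma summable_norm_dx_and_tsum_le {f : ℤ → ℂ} (hf : Summable fun k => ‖dx (dx f) k‖ ^ 2) :
    (Summable fun k => ‖dx f k‖) ∧
      ∑' k, ‖dx f k‖ ≤ √(∑' k : ℤ, 1 / (k : ℝ) ^ 2) * l2norm (dx (dx f)) := by
  -- `1 / |0| = 0` in Lean, which matches `dx f 0 = 0`
  have hweight (k : ℤ) : ‖dx f k‖ = 1 / |(k : ℝ)| * ‖dx (dx f) k‖ := by
    rcases eq_or_ne k 0 with rfl | hk
    · simp [dx]
    · rw [norm_dx (dx f), ← mul_assoc, one_div_mul_cancel (by positivity), one_mul]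
  have hinv : (fun k : ℤ => (1 / |(k : ℝ)|) ^ 2) = fun k : ℤ => 1 / (k : ℝ) ^ 2 := by
    simp [sq_abs]
  simp_rw [hweight]
  obtain ⟨hsum, hle⟩ := summable_and_tsum_mul_le_sqrt (fun _ => by positivity)
    (fun _ => norm_nonneg _) (hinv ▸ Real.summable_one_div_int_pow.mpr one_lt_two) hf
  exact ⟨hsum, hinv ▸ hle⟩

theorem norm_pairing_commutator_le {τ : ℝ} (hτ : 0 ≤ τ) {u v w : ℤ → ℂ} (hu : memH 1 u)
    (hv : memH 2 v) (hw : memH 1 w) :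
    ‖pairing u (fun k => fconv v w k - airy τ (fconv (airy (-τ) v) (airy (-τ) w)) k)‖ ≤
      3 * √(∑' k : ℤ, 1 / (k : ℝ) ^ 2) * τ * l2norm (dx u) *
        (l2norm (dx (dx v)) * l2norm (dx w)) := by
  obtain ⟨hv₁, hv₁_le⟩ := summable_norm_dx_and_tsum_le
    (memH_zero_iff.mp ((hv.dx (s := 1) (by norm_num)).dx (by norm_num)))
  have hdu := memH_zero_iff.mp (hu.dx (by norm_num))
  have hdw := memH_zero_iff.mp (hw.dx (by norm_num))
  obtain ⟨hsum, hle⟩ := summable_and_tsum_mul_tsum_mul_le (fun _ => norm_nonneg _)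
    (fun _ => norm_nonneg _) (fun _ => norm_nonneg _) hdu hv₁ hdw
  have hcoeff (k : ℤ) :
      ‖u k * (fconv v w (-k) - airy τ (fconv (airy (-τ) v) (airy (-τ) w)) (-k))‖ ≤
        3 * τ * (‖dx u k‖ * ∑' j, ‖dx v j‖ * ‖dx w (-k - j)‖) := by
    rw [norm_mul]
    calc ‖u k‖ * ‖fconv v w (-k) - airy τ (fconv (airy (-τ) v) (airy (-τ) w)) (-k)‖
        ≤ ‖u k‖ * (3 * τ * |((-k : ℤ) : ℝ)| * ∑' j, ‖dx v j‖ * ‖dx w (-k - j)‖) := by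
          gcongr
          exact norm_fconv_sub_airy_le hτ (hv.mono one_le_two) hw (-k)
      _ = 3 * τ * (‖dx u k‖ * ∑' j, ‖dx v j‖ * ‖dx w (-k - j)‖) := by
          rw [norm_dx, Int.cast_neg, abs_neg]
          ring
  calc _ ≤ 3 * τ * ∑' k, ‖dx u k‖ * ∑' j, ‖dx v j‖ * ‖dx w (-k - j)‖ :=
        tsum_of_norm_bounded (hsum.hasSum.mul_left (3 * τ)) hcoeff
    _ ≤ 3 * τ * ((∑' j, ‖dx v j‖) * (l2norm (dx u) * l2norm (dx w))) := by
          gcongr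
          exact hle
    _ ≤ 3 * τ * ((√(∑' k : ℤ, 1 / (k : ℝ) ^ 2) * l2norm (dx (dx v))) *
          (l2norm (dx u) * l2norm (dx w))) := by
          gcongr
          exact mul_nonneg (Real.sqrt_nonneg _) (Real.sqrt_nonneg _)
    _ = _ := by ring

/-- `H¹`-level commutator bound:
`I(u,v,w) ≤ c τ ‖∂ₓu‖ · min(‖∂ₓ²v‖‖∂ₓw‖, ‖∂ₓ²w‖‖∂ₓv‖)`. -/
theorem airy_commutator_H1 :
    ∃ c : ℝ, 0 < c ∧ ∀ (τ : ℝ), 0 < τ → ∀ u v w : ℤ → ℂ,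
      memH 2 u → memH 2 v → memH 2 w → memH 1 w →
      ‖pairing u
          (fun k => fconv v w k - airy τ (fconv (airy (-τ) v) (airy (-τ) w)) k)‖ ≤
        c * τ * l2norm (dx u) *
          min (l2norm (dx (dx v)) * l2norm (dx w)) (l2norm (dx (dx w)) * l2norm (dx v)) := by
  have hS : 0 < ∑' k : ℤ, 1 / (k : ℝ) ^ 2 :=
    (Real.summable_one_div_int_pow.mpr one_lt_two).tsum_pos (fun _ => by positivity) 1 (by norm_num)
  refine ⟨3 * √(∑' k : ℤ, 1 / (k : ℝ) ^ 2), by positivity, fun τ hτ u v w hu hv hw _ => ?_⟩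
  have hc : 0 ≤ 3 * √(∑' k : ℤ, 1 / (k : ℝ) ^ 2) * τ * l2norm (dx u) :=
    mul_nonneg (by positivity) (Real.sqrt_nonneg _)
  rw [mul_min_of_nonneg _ _ hc]
  refine le_min (norm_pairing_commutator_le hτ.le (hu.mono one_le_two) hv (hw.mono one_le_two)) ?_
  rw [fconv_comm v w, fconv_comm (airy (-τ) v)]
  exact norm_pairing_commutator_le hτ.le (hu.mono one_le_two) hw (hv.mono one_le_two)
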